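/- The decision version of MWPSAS is NP-hard in the strong sense even when m = 2 and all weights equal 1: CLIQUE reduces to it. Specifically, for the constructed instance, G contains a k-clique if and only if there exists a partition of N into two nonempty sets N^1, N^2 with f(N^1, N^2) <= n + |W| + k. -/
import Mathlib


open Finset

section CliqueInstance

variable {V : Type*} [Fintype V] [DecidableEq V]

/-- The edges of `G`, as a subtype. -/
abbrev EdgeT (G : SimpleGraph V) [DecidableRel G.Adj] := {e : Sym2 V // e ∈ G.edgeFinset}

/-- `|T| = (k² + k)/2`. -/
def tcard (k : ℕ) : ℕ := (k ^ 2 + k) / 2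

/-- `|S| = n + |W| - (k² - k)/2 - 1`. -/
def scard (G : SimpleGraph V) [DecidableRel G.Adj] (k : ℕ) : ℕ :=
  Fintype.card V + G.edgeFinset.card - (k ^ 2 - k) / 2 - 1

/-- The set `N = W ∪ T ∪ T₀` of the MWPSAS instance, as a type. -/
abbrev NT (G : SimpleGraph V) [DecidableRel G.Adj] (k : ℕ) :=
  EdgeT G ⊕ (Fin (tcard k) ⊕ Fin 1)

/-- The set `M = V ∪ S` of the MWPSAS instance, as a type. -/
abbrev MT (G : SimpleGraph V) [DecidableRel G.Adj] (k : ℕ) := V ⊕ Fin (scard G k)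

/-- The associated subsets: an edge is associated with its endpoints,
an element of `T` with `V`, and the element of `T₀` with `S`. -/
def Ma (G : SimpleGraph V) [DecidableRel G.Adj] (k : ℕ) : NT G k → Finset (MT G k)
  | Sum.inl e => (Finset.univ.filter (fun v => v ∈ (e : Sym2 V))).image Sum.inl
  | Sum.inr (Sum.inl _) => Finset.univ.image Sum.inl
  | Sum.inr (Sum.inr _) => Finset.univ.image Sum.inr

/-- The load of a part (all weights are 1):
`|P| + |⋃_{i ∈ P} M(i)|`. -/
def load (G : SimpleGraph V) [DecidableRel G.Adj] (k : ℕ) (P : Finset (NT G k)) : ℕ :=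
  P.card + (P.biUnion (Ma G k)).card

/-! ### Auxiliary lemmas -/

lemma my_union_singleton {α : Type*} [DecidableEq α] (s : Finset α) (a : α) :
    s ∪ {a} = insert a s := by
  ext x; simp [Finset.mem_insert, or_comm]

lemma c2_eq' (k : ℕ) : (k ^ 2 - k) / 2 = k.choose 2 := by
  rw [Nat.choose_two_right]
  congr 1
  cases k with
  | zero => rfl
  | succ m => have : (m+1)^2 = (m+1)*m + (m+1) := by ring
              simp [this]

lemma tcard_eq' (k : ℕ) : tcard k = k.choose 2 + k := by
  have h : (k+1).choose 2 = k.choose 2 + k := by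
    rw [Nat.choose_succ_succ, Nat.choose_one_right]; norm_num; omega
  rw [tcard, ← h, Nat.choose_two_right]
  congr 1
  have : (k+1) * ((k+1)-1) = k^2 + k := by simp; ring
  omega

lemma card_sym2_nondiag (Q : Finset V) :
    (Q.sym2.filter fun e => ¬ e.IsDiag).card = Q.card.choose 2 := by
  have h1 : Q.sym2.card = Q.card.choose 2 + Q.card := by
    rw [Finset.card_sym2, Nat.choose_succ_succ, Nat.choose_one_right]
    simp [Nat.succ_eq_add_one]; omega
  have h2 : (Q.sym2.filter fun e => e.IsDiag) = Q.image Sym2.diag := by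
    ext e
    induction e using Sym2.ind with
    | _ x y =>
      simp only [Finset.mem_filter, Finset.mk_mem_sym2_iff, Sym2.mk_isDiag_iff,
        Finset.mem_image]
      constructor
      · rintro ⟨⟨hx, _⟩, rfl⟩; exact ⟨x, hx, rfl⟩
      · rintro ⟨a, ha, h⟩
        rw [Sym2.diag] at h
        obtain ⟨rfl, rfl⟩ : a = x ∧ a = y := by
          rw [Sym2.eq_iff] at h; tauto
        exact ⟨⟨ha, ha⟩, rfl⟩
  have h3 : (Q.image Sym2.diag).card = Q.card :=
    Finset.card_image_of_injective _ Sym2.diag_injective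
  have := Finset.card_filter_add_card_filter_not (s := Q.sym2)
    (p := fun e => e.IsDiag)
  rw [h2, h3] at this
  omega

variable (G : SimpleGraph V) [DecidableRel G.Adj]

/-- The vertex support of a set of edges. -/
def esupp (E : Finset (EdgeT G)) : Finset V :=
  E.biUnion (fun e => Finset.univ.filter (fun v => v ∈ e.val))

lemma image_val_subset_sym2_nondiag (E : Finset (EdgeT G)) :
    E.image Subtype.val ⊆ (esupp G E).sym2.filter (fun e => ¬ e.IsDiag) := by
  intro f hf
  simp only [mem_image] at hf
  obtain ⟨e, he, rfl⟩ := hf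
  simp only [mem_filter, Finset.mem_sym2_iff]
  refine ⟨fun a ha => ?_, ?_⟩
  · exact mem_biUnion.2 ⟨e, he, by simp [ha]⟩
  · exact G.not_isDiag_of_mem_edgeSet (SimpleGraph.mem_edgeFinset.1 e.2)

lemma card_le_choose (E : Finset (EdgeT G)) : E.card ≤ (esupp G E).card.choose 2 := by
  calc E.card = (E.image Subtype.val).card :=
        (Finset.card_image_of_injective _ Subtype.val_injective).symm
    _ ≤ ((esupp G E).sym2.filter (fun e => ¬ e.IsDiag)).card :=
        Finset.card_le_card (image_val_subset_sym2_nondiag G E)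
    _ = (esupp G E).card.choose 2 := card_sym2_nondiag _

lemma clique_of_card_edges (E : Finset (EdgeT G))
    (h : (esupp G E).card.choose 2 ≤ E.card) : G.IsClique (esupp G E) := by
  have hcard : E.card = (E.image Subtype.val).card :=
    (Finset.card_image_of_injective _ Subtype.val_injective).symm
  have heq : E.image Subtype.val = (esupp G E).sym2.filter (fun e => ¬ e.IsDiag) :=
    Finset.eq_of_subset_of_card_le (image_val_subset_sym2_nondiag G E)
      (by rw [card_sym2_nondiag, ← hcard]; exact h)
  intro a ha b hb hab
  have : s(a, b) ∈ (esupp G E).sym2.filter (fun e => ¬ e.IsDiag) := by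
    simp only [mem_filter, Finset.mk_mem_sym2_iff, Sym2.mk_isDiag_iff]
    exact ⟨⟨ha, hb⟩, hab⟩
  rw [← heq] at this
  simp only [mem_image] at this
  obtain ⟨e, _, he⟩ := this
  have := e.2
  rw [he, SimpleGraph.mem_edgeFinset, SimpleGraph.mem_edgeSet] at this
  exact this

lemma clique_edges_image (Q : Finset V) (hQ : G.IsClique Q) :
    ((Finset.univ.filter (fun e : EdgeT G => e.val ∈ Q.sym2)).image Subtype.val)
      = Q.sym2.filter (fun e => ¬ e.IsDiag) := by
  ext f
  simp only [mem_image, mem_filter, mem_univ, true_and]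
  constructor
  · rintro ⟨e, he, rfl⟩
    exact ⟨he, G.not_isDiag_of_mem_edgeSet (SimpleGraph.mem_edgeFinset.1 e.2)⟩
  · rintro ⟨hf, hd⟩
    induction f using Sym2.ind with
    | _ x y =>
      rw [Finset.mk_mem_sym2_iff] at hf
      rw [Sym2.mk_isDiag_iff] at hd
      have hadj : G.Adj x y := hQ hf.1 hf.2 hd
      exact ⟨⟨s(x, y), by simp [SimpleGraph.mem_edgeFinset, hadj]⟩,
        by rw [Finset.mk_mem_sym2_iff]; exact hf, rfl⟩

lemma clique_edges_card (Q : Finset V) (hQ : G.IsClique Q) :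
    (Finset.univ.filter (fun e : EdgeT G => e.val ∈ Q.sym2)).card = Q.card.choose 2 := by
  rw [← Finset.card_image_of_injective _ Subtype.val_injective,
    clique_edges_image G Q hQ, card_sym2_nondiag]

lemma clique_esupp (Q : Finset V) (hQ : G.IsClique Q) (h2 : 2 ≤ Q.card) :
    esupp G (Finset.univ.filter (fun e : EdgeT G => e.val ∈ Q.sym2)) = Q := by
  ext v
  simp only [esupp, mem_biUnion, mem_filter, mem_univ, true_and]
  constructor
  · rintro ⟨e, he, hv⟩
    exact Finset.mem_sym2_iff.1 he v hv
  · intro hv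
    obtain ⟨u, hu, hne⟩ := Finset.exists_mem_ne (lt_of_lt_of_le one_lt_two h2) v
    have hadj : G.Adj v u := hQ hv hu (Ne.symm hne)
    refine ⟨⟨s(v, u), by simp [SimpleGraph.mem_edgeFinset, hadj]⟩, ?_, ?_⟩
    · rw [Finset.mk_mem_sym2_iff]; exact ⟨hv, hu⟩
    · simp

variable (k : ℕ)

lemma biUnion_image_inl (E : Finset (EdgeT G)) :
    ((E.image Sum.inl : Finset (NT G k))).biUnion (Ma G k)
      = (esupp G E).image Sum.inl := by
  rw [Finset.image_biUnion, esupp, Finset.biUnion_image]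
  rfl

lemma disjoint_inl_inr (A : Finset V) (B : Finset (Fin (scard G k))) :
    Disjoint (A.image (Sum.inl : V → MT G k)) (B.image Sum.inr) := by
  simp [Finset.disjoint_left]

lemma card_MT_parts (A : Finset V) (B : Finset (Fin (scard G k))) :
    ((A.image (Sum.inl : V → MT G k)) ∪ B.image Sum.inr).card = A.card + B.card := by
  rw [Finset.card_union_of_disjoint (disjoint_inl_inr G k A B),
    Finset.card_image_of_injective _ Sum.inl_injective,
    Finset.card_image_of_injective _ Sum.inr_injective]

lemma card_NT_eq : Fintype.card (NT G k) = G.edgeFinset.card + (tcard k + 1) := by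
  simp [Fintype.card_sum, Fintype.card_coe]

end CliqueInstance

section Main

variable {V : Type*} [Fintype V] [DecidableEq V]

/-- CLIQUE reduces to MWPSAS with `m = 2` and unit weights: `G` contains a
`k`-clique iff the constructed MWPSAS instance admits a partition of `N` into
two nonempty subsets `N¹, N²` with `f(N¹,N²) ≤ n + |W| + k`. -/
theorem stmt_8 (G : SimpleGraph V) [DecidableRel G.Adj] (k n : ℕ)
    (hn : Fintype.card V = n) (hk : 1 < k) (hkn : k < n)
    (hkW : (k ^ 2 - k) / 2 < G.edgeFinset.card) :
    (∃ Q : Finset V, G.IsNClique k Q) ↔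
      ∃ N1 N2 : Finset (NT G k),
        N1.Nonempty ∧ N2.Nonempty ∧ Disjoint N1 N2 ∧ N1 ∪ N2 = Finset.univ ∧
          max (load G k N1) (load G k N2) ≤ n + G.edgeFinset.card + k := by
  have hw : k.choose 2 < G.edgeFinset.card := by rwa [c2_eq'] at hkW
  have hscard : scard G k + k.choose 2 + 1 = n + G.edgeFinset.card := by
    rw [scard, c2_eq', hn]; omega
  have htc : tcard k = k.choose 2 + k := tcard_eq' k
  have hcardNT : Fintype.card (NT G k) = G.edgeFinset.card + (k.choose 2 + k) + 1 := by
    rw [card_NT_eq, htc]; omega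
  have ht0 : (0 : ℕ) < tcard k := by omega
  constructor
  · rintro ⟨Q, hQ⟩
    obtain ⟨hQc, hQk⟩ := hQ
    set CE := Finset.univ.filter (fun e : EdgeT G => e.val ∈ Q.sym2) with hCE
    set t0 : NT G k := Sum.inr (Sum.inr 0) with hT0def
    set N1 : Finset (NT G k) := CE.image Sum.inl ∪ {t0} with hN1def
    refine ⟨N1, N1ᶜ, ⟨t0, by simp [hN1def]⟩, ⟨Sum.inr (Sum.inl ⟨0, ht0⟩), ?_⟩,
      disjoint_compl_right, Finset.union_compl _, ?_⟩
    · simp [hN1def, hT0def]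
    · have hCEcard : CE.card = k.choose 2 := by
        rw [hCE, clique_edges_card G Q hQc, hQk]
      have hsupp : esupp G CE = Q := clique_esupp G Q hQc (by omega)
      have ht0notin : t0 ∉ (CE.image Sum.inl : Finset (NT G k)) := by simp [hT0def]
      have hN1card : N1.card = k.choose 2 + 1 := by
        rw [hN1def, Finset.card_union_of_disjoint
            (Finset.disjoint_singleton_right.2 ht0notin),
          Finset.card_image_of_injective _ Sum.inl_injective, hCEcard,
          Finset.card_singleton]
      have hbu1 : N1.biUnion (Ma G k)
          = Q.image Sum.inl ∪ Finset.univ.image Sum.inr := by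
        rw [hN1def, my_union_singleton, Finset.biUnion_insert,
          biUnion_image_inl, hsupp, Finset.union_comm]
        rfl
      have hload1 : load G k N1 = n + G.edgeFinset.card + k := by
        rw [load, hN1card, hbu1, card_MT_parts, hQk, Finset.card_univ,
          Fintype.card_fin]
        omega
      have hN2card : N1ᶜ.card = G.edgeFinset.card + k := by
        rw [Finset.card_compl, hcardNT, hN1card]; omega
      have hbu2 : N1ᶜ.biUnion (Ma G k) = Finset.univ.image Sum.inl := by
        apply Finset.Subset.antisymm
        · intro x hx
          obtain ⟨i, hi, hxi⟩ := Finset.mem_biUnion.1 hx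
          match i with
          | Sum.inl e =>
            obtain ⟨v, _, rfl⟩ := Finset.mem_image.1 hxi
            simp
          | Sum.inr (Sum.inl t) =>
            obtain ⟨v, _, rfl⟩ := Finset.mem_image.1 hxi
            simp
          | Sum.inr (Sum.inr j) =>
            exfalso
            have hj : j = 0 := Subsingleton.elim j 0
            subst hj
            exact (Finset.mem_compl.1 hi) (by simp [hN1def, hT0def])
        · intro x hx
          obtain ⟨v, _, rfl⟩ := Finset.mem_image.1 hx
          refine Finset.mem_biUnion.2 ⟨Sum.inr (Sum.inl ⟨0, ht0⟩),
            Finset.mem_compl.2 (by simp [hN1def, hT0def]), ?_⟩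
          exact Finset.mem_image_of_mem _ (Finset.mem_univ v)
      have hload2 : load G k N1ᶜ = n + G.edgeFinset.card + k := by
        rw [load, hN2card, hbu2, Finset.card_image_of_injective _ Sum.inl_injective,
          Finset.card_univ, hn]
        omega
      rw [hload1, hload2]
      simp
  · rintro ⟨N1, N2, hne1, hne2, hdisj, huniv, hmax⟩
    rw [max_le_iff] at hmax
    obtain ⟨hl1, hl2⟩ := hmax
    have key : ∀ A B : Finset (NT G k), Disjoint A B → A ∪ B = Finset.univ →
        load G k A ≤ n + G.edgeFinset.card + k →
        load G k B ≤ n + G.edgeFinset.card + k →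
        (Sum.inr (Sum.inr 0) : NT G k) ∈ A → ∃ Q, G.IsNClique k Q := by
      intro A Bp hd hu hA hB ht0A
      have hBc : Bp = Aᶜ := by
        ext x
        simp only [Finset.mem_compl]
        constructor
        · intro hx hxA; exact (Finset.disjoint_left.1 hd) hxA hx
        · intro hx
          have hxu : x ∈ A ∪ Bp := by rw [hu]; exact Finset.mem_univ x
          rcases Finset.mem_union.1 hxu with h | h
          · exact absurd h hx
          · exact h
      subst hBc
      have hcards : A.card + Aᶜ.card = G.edgeFinset.card + (k.choose 2 + k) + 1 := by
        rw [Finset.card_add_card_compl, hcardNT]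
      rw [load] at hA hB
      -- Step 1: no element of T lies in A
      have hT : ∀ t : Fin (tcard k), (Sum.inr (Sum.inl t) : NT G k) ∉ A := by
        by_contra hcon
        push_neg at hcon
        obtain ⟨t, htA⟩ := hcon
        have hsub1 : (Finset.univ.image Sum.inl ∪ Finset.univ.image Sum.inr :
            Finset (MT G k)) ⊆ A.biUnion (Ma G k) := by
          intro x hx
          rcases Finset.mem_union.1 hx with h | h
          · exact Finset.mem_biUnion.2 ⟨Sum.inr (Sum.inl t), htA, h⟩
          · exact Finset.mem_biUnion.2 ⟨Sum.inr (Sum.inr 0), ht0A, h⟩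
        have hbuA : n + scard G k ≤ (A.biUnion (Ma G k)).card := by
          calc n + scard G k
              = ((Finset.univ.image Sum.inl ∪ Finset.univ.image Sum.inr :
                Finset (MT G k))).card := by
                rw [card_MT_parts]; simp [Finset.card_univ, hn]
            _ ≤ _ := Finset.card_le_card hsub1
        by_cases hsplit : ∀ t' : Fin (tcard k), (Sum.inr (Sum.inl t') : NT G k) ∈ A
        · -- all of T is in A
          have hsubA : (Finset.univ.image
              (fun t : Fin (tcard k) => (Sum.inr (Sum.inl t) : NT G k))
              ∪ {Sum.inr (Sum.inr 0)}) ⊆ A := by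
            intro x hx
            rcases Finset.mem_union.1 hx with h | h
            · obtain ⟨t', _, rfl⟩ := Finset.mem_image.1 h
              exact hsplit t'
            · rw [Finset.mem_singleton.1 h]; exact ht0A
          have hcardA : tcard k + 1 ≤ A.card := by
            have hinj : Function.Injective
                (fun t : Fin (tcard k) => (Sum.inr (Sum.inl t) : NT G k)) := by
              intro a b hab
              simpa using hab
            have := Finset.card_le_card hsubA
            rwa [Finset.card_union_of_disjoint (by simp),
              Finset.card_image_of_injective _ hinj, Finset.card_univ,
              Fintype.card_fin, Finset.card_singleton] at this
          omega
        · -- T is split between A and its complement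
          push_neg at hsplit
          obtain ⟨t', ht'⟩ := hsplit
          have hsub2 : (Finset.univ.image Sum.inl : Finset (MT G k))
              ⊆ Aᶜ.biUnion (Ma G k) := by
            intro x hx
            exact Finset.mem_biUnion.2 ⟨Sum.inr (Sum.inl t'),
              Finset.mem_compl.2 ht', hx⟩
          have hbuB : n ≤ (Aᶜ.biUnion (Ma G k)).card := by
            calc n = (Finset.univ.image (Sum.inl : V → MT G k)).card := by
                  rw [Finset.card_image_of_injective _ Sum.inl_injective,
                    Finset.card_univ, hn]
              _ ≤ _ := Finset.card_le_card hsub2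
          omega
      -- Step 2: A consists of t₀ together with a set of edges
      set E1 := Finset.univ.filter (fun e : EdgeT G => Sum.inl e ∈ A) with hE1
      set Q := esupp G E1 with hQdef
      have hAeq : A = E1.image Sum.inl ∪ {Sum.inr (Sum.inr 0)} := by
        ext x
        match x with
        | Sum.inl e => simp [hE1]
        | Sum.inr (Sum.inl t) => simp [hT t]
        | Sum.inr (Sum.inr j) =>
          have hj : j = 0 := Subsingleton.elim j 0
          subst hj
          simp [ht0A]
      have hAcard : A.card = E1.card + 1 := by
        rw [hAeq, Finset.card_union_of_disjoint (by simp),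
          Finset.card_image_of_injective _ Sum.inl_injective, Finset.card_singleton]
      have hbuA : A.biUnion (Ma G k) = Q.image Sum.inl ∪ Finset.univ.image Sum.inr := by
        rw [hAeq, my_union_singleton, Finset.biUnion_insert,
          biUnion_image_inl, Finset.union_comm]
        rfl
      have hA' : E1.card + 1 + (Q.card + scard G k) ≤ n + G.edgeFinset.card + k := by
        rw [hAcard, hbuA, card_MT_parts, Finset.card_univ, Fintype.card_fin] at hA
        exact hA
      have hbuAc : Aᶜ.biUnion (Ma G k) = Finset.univ.image Sum.inl := by
        apply Finset.Subset.antisymm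
        · intro x hx
          obtain ⟨i, hi, hxi⟩ := Finset.mem_biUnion.1 hx
          match i with
          | Sum.inl e =>
            obtain ⟨v, _, rfl⟩ := Finset.mem_image.1 hxi
            simp
          | Sum.inr (Sum.inl t) =>
            obtain ⟨v, _, rfl⟩ := Finset.mem_image.1 hxi
            simp
          | Sum.inr (Sum.inr j) =>
            exfalso
            have hj : j = 0 := Subsingleton.elim j 0
            subst hj
            exact (Finset.mem_compl.1 hi) ht0A
        · intro x hx
          obtain ⟨v, _, rfl⟩ := Finset.mem_image.1 hx
          refine Finset.mem_biUnion.2 ⟨Sum.inr (Sum.inl ⟨0, ht0⟩),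
            Finset.mem_compl.2 (hT _), ?_⟩
          exact Finset.mem_image_of_mem _ (Finset.mem_univ v)
      have hB' : Aᶜ.card + n ≤ n + G.edgeFinset.card + k := by
        rw [hbuAc, Finset.card_image_of_injective _ Sum.inl_injective,
          Finset.card_univ, hn] at hB
        exact hB
      have hble : E1.card ≤ Q.card.choose 2 := card_le_choose G E1
      have hbge : k.choose 2 ≤ E1.card := by omega
      have hqle : Q.card ≤ k := by omega
      have hqk : Q.card = k := by
        by_contra hne
        have hqlt : Q.card ≤ k - 1 := by omega
        have h1 : Q.card.choose 2 ≤ (k - 1).choose 2 := Nat.choose_le_choose 2 hqlt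
        have h2 : ((k - 1) + 1).choose 2 = (k - 1).choose 1 + (k - 1).choose 2 :=
          Nat.choose_succ_succ _ 1
        rw [Nat.choose_one_right] at h2
        have hk1 : (k - 1) + 1 = k := by omega
        rw [hk1] at h2
        omega
      refine ⟨Q, clique_of_card_edges G E1 ?_, hqk⟩
      rw [hqk]
      omega
    have hmem : (Sum.inr (Sum.inr 0) : NT G k) ∈ N1 ∪ N2 := by
      rw [huniv]; exact Finset.mem_univ _
    rcases Finset.mem_union.1 hmem with h | h
    · exact key N1 N2 hdisj huniv hl1 hl2 h
    · exact key N2 N1 hdisj.symm (by rw [Finset.union_comm]; exact huniv) hl2 hl1 h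

end Main
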